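/- arXiv:2409.13124 — 2 statements merged into one kernel-verified Lean document; each statement's English description precedes it below -/
import Mathlib

section
/- Let A be an Almost Gautama algebra containing an element a with a* = 0 and a' = 1. Then for all x ∈ A, a ∨ x ∨ x' = 1. -/
/-- A Stone algebra: a bounded distributive lattice with a pseudocomplement
operation `s` satisfying the Stone identity. -/
class StoneAlgebra (α : Type*) extends DistribLattice α, BoundedOrder α where
  s : α → α
  s_bot : s ⊥ = ⊤
  s_top : s ⊤ = ⊥
  s_sup : ∀ x y : α, s (x ⊔ y) = s x ⊓ s y
  s_inf : ∀ x y : α, s (s (x ⊓ y)) = s (s x) ⊓ s (s y)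
  le_ss : ∀ x : α, x ≤ s (s x)
  inf_s : ∀ x : α, x ⊓ s x = ⊥
  stone : ∀ x : α, s x ⊔ s (s x) = ⊤

/-- An Almost Gautama algebra: a Stone algebra together with a dually
quasi-De Morgan operation `p`, satisfying regularity (R1), weak
star-regularity, and (L1). -/
class AGAlgebra (α : Type*) extends StoneAlgebra α where
  p : α → α
  p_bot : p ⊥ = ⊤
  p_top : p ⊤ = ⊥
  p_inf : ∀ x y : α, p (x ⊓ y) = p x ⊔ p y
  pp_sup : ∀ x y : α, p (p (x ⊔ y)) = p (p x) ⊔ p (p y)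
  pp_le : ∀ x : α, p (p x) ≤ x
  R1 : ∀ x y : α, x ⊓ p (s (p x)) ≤ y ⊔ s y
  weak_star : ∀ x : α, p (p (s x)) = s x
  L1 : ∀ x : α, s (p (x ⊓ s (p x))) = x ⊓ s (p x)

open StoneAlgebra AGAlgebra

section AGLemmas

variable {α : Type*} [AGAlgebra α]

private lemma p_anti {x y : α} (h : x ≤ y) : p y ≤ p x := by
  have hx : x ⊓ y = x := inf_eq_left.mpr h
  calc p y ≤ p x ⊔ p y := le_sup_right
    _ = p (x ⊓ y) := (p_inf x y).symm
    _ = p x := by rw [hx]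

private lemma ppp (x : α) : p (p (p x)) = p x :=
  le_antisymm (pp_le (p x)) (p_anti (pp_le x))

private lemma top_of_p_bot {u : α} (h : p u = ⊥) : u = ⊤ := by
  have h2 := pp_le u
  rw [h, p_bot] at h2
  exact top_unique h2

private lemma adj {x y : α} (h : x ⊓ y = ⊥) : y ≤ s x := by
  have h3 : s (s x) ⊓ s (s y) = ⊥ := by
    rw [← s_inf, h, s_bot, s_top]
  calc y ≤ s (s y) := le_ss y
    _ = s (s y) ⊓ (s x ⊔ s (s x)) := by rw [stone, inf_top_eq]
    _ = (s (s y) ⊓ s x) ⊔ (s (s y) ⊓ s (s x)) := inf_sup_left _ _ _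
    _ ≤ s x := by
        rw [inf_comm (s (s y)) (s (s x)), h3, sup_bot_eq]
        exact inf_le_right

private lemma ss_of_compl {v : α} (h : v ⊔ s v = ⊤) : s (s v) = v := by
  refine le_antisymm ?_ (le_ss v)
  calc s (s v) = s (s v) ⊓ (v ⊔ s v) := by rw [h, inf_top_eq]
    _ = (s (s v) ⊓ v) ⊔ (s (s v) ⊓ s v) := inf_sup_left _ _ _
    _ = (s (s v) ⊓ v) ⊔ ⊥ := by rw [inf_comm (s (s v)) (s v), inf_s]
    _ ≤ v := by rw [sup_bot_eq]; exact inf_le_right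

private lemma absorb {a : α} (ha' : p a = ⊤) (u : α) : p (a ⊔ u) = p u := by
  have hppa : p (p a) = ⊥ := by rw [ha', p_top]
  have h1 : p (p (a ⊔ u)) = p (p u) := by rw [pp_sup, hppa, bot_sup_eq]
  calc p (a ⊔ u) = p (p (p (a ⊔ u))) := (ppp _).symm
    _ = p (p (p u)) := by rw [h1]
    _ = p u := ppp u

private lemma lem2 {a : α} (ha : s a = ⊥) (u : α) : u ⊓ p (s (p u)) ≤ a := by
  have h := R1 u a
  rwa [ha, sup_bot_eq] at h

private lemma lem3 {a : α} (ha : s a = ⊥) (ha' : p a = ⊤) (u : α) :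
    p u ⊔ s (p u) = ⊤ := by
  have h := p_anti (lem2 ha u)
  rw [ha', p_inf, weak_star] at h
  exact top_unique h

private lemma top_cancel {a u : α} (ha' : p a = ⊤) (h : a ⊔ u = ⊤) : u = ⊤ := by
  apply top_of_p_bot
  rw [← absorb ha' u, h, p_top]

private lemma rule {a : α} (ha : s a = ⊥) (ha' : p a = ⊤) (u : α) :
    p (s (p u)) = s (p (p u)) := by
  have hg : p (p u) ⊓ p (s (p u)) ≤ a := by
    have h := lem2 ha (p (p u))
    rwa [ppp] at h
  have hAC : p (p u) ⊔ s (p (p u)) = ⊤ := lem3 ha ha' (p u)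
  have hACb : p (p u) ⊓ s (p (p u)) = ⊥ := inf_s _
  have hAB : p (p u) ⊔ p (s (p u)) = ⊤ := by
    rw [← p_inf, inf_s, p_bot]
  have hBD : p (s (p u)) ⊔ s (p (s (p u))) = ⊤ := lem3 ha ha' (s (p u))
  have hBDb : p (s (p u)) ⊓ s (p (s (p u))) = ⊥ := inf_s _
  have hCD : s (p (p u)) ⊔ s (p (s (p u))) = ⊤ := by
    apply top_cancel ha'
    apply top_unique
    have e1 : p (p u) ⊔ (s (p (p u)) ⊔ s (p (s (p u)))) = ⊤ := by
      rw [← sup_assoc, hAC, top_sup_eq]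
    have e2 : p (s (p u)) ⊔ (s (p (p u)) ⊔ s (p (s (p u)))) = ⊤ := by
      rw [sup_comm (s (p (p u))) (s (p (s (p u)))), ← sup_assoc, hBD, top_sup_eq]
    have h1 : (p (p u) ⊓ p (s (p u))) ⊔ (s (p (p u)) ⊔ s (p (s (p u)))) = ⊤ := by
      rw [sup_inf_right, e1, e2, inf_top_eq]
    calc (⊤ : α) = (p (p u) ⊓ p (s (p u))) ⊔ (s (p (p u)) ⊔ s (p (s (p u)))) := h1.symm
      _ ≤ a ⊔ (s (p (p u)) ⊔ s (p (s (p u)))) := sup_le_sup_right hg _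
  have hABb : p (p u) ⊓ p (s (p u)) = ⊥ := by
    have h2 : p (p u) ⊓ p (s (p u))
        = (p (p u) ⊓ p (s (p u))) ⊓ (s (p (p u)) ⊔ s (p (s (p u)))) := by
      rw [hCD, inf_top_eq]
    rw [h2, inf_sup_left, inf_right_comm (p (p u)) (p (s (p u))) (s (p (p u))),
      hACb, bot_inf_eq, inf_assoc, hBDb, inf_bot_eq, sup_bot_eq]
  have h1 : p (s (p u)) ≤ s (p (p u)) := by
    calc p (s (p u)) = p (s (p u)) ⊓ (p (p u) ⊔ s (p (p u))) := by rw [hAC, inf_top_eq]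
      _ = (p (s (p u)) ⊓ p (p u)) ⊔ (p (s (p u)) ⊓ s (p (p u))) := inf_sup_left _ _ _
      _ = ⊥ ⊔ (p (s (p u)) ⊓ s (p (p u))) := by rw [inf_comm (p (s (p u))) (p (p u)), hABb]
      _ ≤ s (p (p u)) := by rw [bot_sup_eq]; exact inf_le_right
  have h2 : s (p (p u)) ≤ p (s (p u)) := by
    calc s (p (p u)) = s (p (p u)) ⊓ (p (p u) ⊔ p (s (p u))) := by rw [hAB, inf_top_eq]
      _ = (s (p (p u)) ⊓ p (p u)) ⊔ (s (p (p u)) ⊓ p (s (p u))) := inf_sup_left _ _ _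
      _ = ⊥ ⊔ (s (p (p u)) ⊓ p (s (p u))) := by
          rw [inf_comm (s (p (p u))) (p (p u)), hACb]
      _ ≤ p (s (p u)) := by rw [bot_sup_eq]; exact inf_le_right
  exact le_antisymm h1 h2

private lemma lemA {a : α} (ha : s a = ⊥) (ha' : p a = ⊤) (x : α) :
    a ⊓ s (p x) ≤ p (p x) := by
  have l1 := L1 (a ⊔ x)
  rw [absorb ha' x] at l1
  have hL : s (p ((a ⊔ x) ⊓ s (p x))) = s (p x) ⊓ p (p x) := by
    rw [p_inf, absorb ha' x, rule ha ha' x, s_sup, ss_of_compl (lem3 ha ha' (p x))]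
  have key : s (p x) ⊓ p (p x) = (a ⊔ x) ⊓ s (p x) := hL.symm.trans l1
  have h5 : a ⊓ s (p x) ≤ (a ⊔ x) ⊓ s (p x) := inf_le_inf_right _ le_sup_left
  rw [← key] at h5
  exact h5.trans inf_le_right

private lemma sp_le {a : α} (ha : s a = ⊥) (ha' : p a = ⊤) (x : α) :
    s (p x) ≤ x := by
  have h1 : a ⊓ (s (p x) ⊓ s (p (p x))) = ⊥ := by
    apply le_bot_iff.mp
    calc a ⊓ (s (p x) ⊓ s (p (p x))) = (a ⊓ s (p x)) ⊓ s (p (p x)) := (inf_assoc _ _ _).symm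
      _ ≤ p (p x) ⊓ s (p (p x)) := inf_le_inf_right _ (lemA ha ha' x)
      _ = ⊥ := inf_s _
  have h2 : s (p x) ⊓ s (p (p x)) ≤ s a := adj h1
  rw [ha] at h2
  have h3 : s (p (p x)) ⊓ s (p x) = ⊥ := by
    rw [inf_comm]; exact le_bot_iff.mp h2
  have h4 : s (p x) ≤ s (s (p (p x))) := adj h3
  rw [ss_of_compl (lem3 ha ha' (p x))] at h4
  exact h4.trans (pp_le x)

end AGLemmas


/-- In an Almost Gautama algebra containing `a` with `a* = ⊥` and `a' = ⊤`,
the identity `a ⊔ x ⊔ x' = ⊤` holds. -/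
theorem stmt_11 {α : Type*} [AGAlgebra α]
    (a : α) (ha : s a = ⊥) (ha' : p a = ⊤) :
    ∀ x : α, a ⊔ x ⊔ p x = ⊤ := by
  intro x
  have hx : x ⊔ p x = ⊤ := by
    apply top_unique
    calc (⊤ : α) = p x ⊔ s (p x) := (lem3 ha ha' x).symm
      _ ≤ p x ⊔ x := sup_le_sup_left (sp_le ha ha' x) _
      _ = x ⊔ p x := sup_comm _ _
  rw [sup_assoc, hx, sup_top_eq]
end

section
/- Let A be an Almost Gautama algebra containing an element a with a* = 0. Then for all x, y ∈ A, [(a ∨ y) ∧ x]* = x* and (a ∨ x) ∨ (a ∨ x)'** = 1. -/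
open StoneAlgebra AGAlgebra

lemma s_anti {α : Type*} [StoneAlgebra α] {x y : α} (h : x ≤ y) : s y ≤ s x := by
  have := s_sup x y
  rw [sup_eq_right.mpr h] at this
  rw [this]
  exact inf_le_left

lemma sss {α : Type*} [StoneAlgebra α] (x : α) : s (s (s x)) = s x :=
  le_antisymm (s_anti (le_ss x)) (le_ss (s x))

/-- In an Almost Gautama algebra containing `a` with `a* = ⊥`, we have
`((a ⊔ y) ⊓ x)* = x*` and `(a ⊔ x) ⊔ (a ⊔ x)'** = ⊤`. -/
theorem stmt_17 {α : Type*} [AGAlgebra α] (a : α) (ha : s a = ⊥) :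
    ∀ x y : α, s ((a ⊔ y) ⊓ x) = s x ∧
      (a ⊔ x) ⊔ s (s (p (a ⊔ x))) = ⊤ := by
  intro x y
  have hdense : ∀ z : α, s (a ⊔ z) = ⊥ := fun z => by
    rw [s_sup, ha, bot_inf_eq]
  constructor
  · have h1 : s (s ((a ⊔ y) ⊓ x)) = s (s x) := by
      rw [s_inf, hdense, s_bot, top_inf_eq]
    calc s ((a ⊔ y) ⊓ x) = s (s (s ((a ⊔ y) ⊓ x))) := (sss _).symm
      _ = s (s (s x)) := by rw [h1]
      _ = s x := sss x
  · set b := a ⊔ x with hb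
    have hsb : s b = ⊥ := hdense x
    -- b ⊓ s (p b) is closed, and its double star is s (p b)
    have h2 : s (s (b ⊓ s (p b))) = s (p b) := by
      rw [s_inf, hsb, s_bot, top_inf_eq, sss]
    have h3 : s (s (b ⊓ s (p b))) = b ⊓ s (p b) := by
      conv_lhs => rw [← L1 b, sss]
      exact L1 b
    have h4 : s (p b) ≤ b := by
      rw [← h2, h3]; exact inf_le_left
    refine le_antisymm le_top ?_
    calc (⊤ : α) = s (p b) ⊔ s (s (p b)) := (stone (p b)).symm
      _ ≤ b ⊔ s (s (p b)) := sup_le_sup_right h4 _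
end
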